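/- arXiv:2503.14820 — 8 statements merged into one kernel-verified Lean document; each statement's English description precedes it below -/
import Mathlib

section
/- For every continuous function g : [0,1] → [0,1] satisfying g(t) + ∫₀ᵗ g(z) dz ≥ 1 for all t ∈ [0,1], one has ∫₀¹ g(t) dt ≥ 1 - 1/e. -/
open Set intervalIntegral MeasureTheory

/-- Optimal value of the RANKING variational instance is ≥ 1 - 1/e. -/
theorem stmt_5 (g : ℝ → ℝ) (hc : ContinuousOn g (Set.Icc 0 1))
    (hrange : ∀ t ∈ Set.Icc (0:ℝ) 1, g t ∈ Set.Icc (0:ℝ) 1)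
    (hcons : ∀ t ∈ Set.Icc (0:ℝ) 1, g t + ∫ z in (0:ℝ)..t, g z ≥ 1) :
    (∫ t in (0:ℝ)..1, g t) ≥ 1 - 1 / Real.exp 1 := by
  set u : ℝ → ℝ := fun t => ∫ z in (0:ℝ)..t, g z with hu
  have hInt : IntervalIntegrable g volume 0 1 := by
    apply ContinuousOn.intervalIntegrable
    rwa [Set.uIcc_of_le (by norm_num : (0:ℝ) ≤ 1)]
  have hu_cont : ContinuousOn u (Set.Icc 0 1) := by
    have := intervalIntegral.continuousOn_primitive_interval'
      (μ := volume) (f := g) (b₁ := 0) (b₂ := 1) hInt Set.left_mem_uIcc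
    rwa [Set.uIcc_of_le (by norm_num : (0:ℝ) ≤ 1)] at this
  have hu_deriv : ∀ t ∈ Set.Ioo (0:ℝ) 1, HasDerivAt u (g t) t := by
    intro t ht
    have htmem : t ∈ Set.Icc (0:ℝ) 1 := Set.mem_Icc_of_Ioo ht
    have hnhds : Set.Icc (0:ℝ) 1 ∈ nhds t :=
      Icc_mem_nhds ht.1 ht.2
    have hca : ContinuousAt g t := hc.continuousAt hnhds
    have hInt' : IntervalIntegrable g volume 0 t := by
      apply ContinuousOn.intervalIntegrable
      apply hc.mono
      rw [Set.uIcc_of_le htmem.1]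
      exact Set.Icc_subset_Icc le_rfl htmem.2
    exact intervalIntegral.integral_hasDerivAt_right hInt'
      ⟨Set.Icc 0 1, hnhds, hc.aestronglyMeasurable measurableSet_Icc⟩ hca
  set F : ℝ → ℝ := fun t => Real.exp t * u t - (Real.exp t - 1) with hF
  have hF_deriv : ∀ t ∈ Set.Ioo (0:ℝ) 1,
      HasDerivAt F (Real.exp t * (u t + g t - 1)) t := by
    intro t ht
    have h1 : HasDerivAt (fun t => Real.exp t * u t)
        (Real.exp t * u t + Real.exp t * g t) t :=
      (Real.hasDerivAt_exp t).mul (hu_deriv t ht)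
    have h2 : HasDerivAt (fun t => Real.exp t - 1) (Real.exp t) t :=
      (Real.hasDerivAt_exp t).sub_const 1
    have := h1.sub h2
    exact this.congr_deriv (by ring)
  have hF_cont : ContinuousOn F (Set.Icc 0 1) :=
    ((Real.continuous_exp.continuousOn).mul hu_cont).sub
      ((Real.continuous_exp.continuousOn).sub continuousOn_const)
  have hmono : MonotoneOn F (Set.Icc 0 1) := by
    apply monotoneOn_of_deriv_nonneg (convex_Icc 0 1) hF_cont
    · intro t ht
      rw [interior_Icc] at ht
      exact (hF_deriv t ht).differentiableAt.differentiableWithinAt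
    · intro t ht
      rw [interior_Icc] at ht
      rw [(hF_deriv t ht).deriv]
      have := hcons t (Set.mem_Icc_of_Ioo ht)
      have : u t + g t - 1 ≥ 0 := by simp [hu]; linarith
      positivity
  have h0 : F 0 = 0 := by simp [hF, hu]
  have h1 : F 0 ≤ F 1 := hmono (by norm_num) (by norm_num) (by norm_num)
  rw [h0] at h1
  have hF1 : Real.exp 1 * u 1 - (Real.exp 1 - 1) ≥ 0 := h1
  have hepos : (0:ℝ) < Real.exp 1 := Real.exp_pos 1
  have : u 1 ≥ 1 - 1 / Real.exp 1 := by
    rw [ge_iff_le]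
    calc 1 - 1 / Real.exp 1 = (Real.exp 1 - 1) / Real.exp 1 := by field_simp
      _ ≤ u 1 := (div_le_iff₀ hepos).mpr (by nlinarith)
  simpa [hu] using this
end

section
/- The function g(t) = e^{-t} satisfies ∫₀ᵗ g(z)(1 - z + t) dz ≤ t for all t ∈ [0,1], and ∫₀¹ g(t)(1 - t) dt = 1/e. -/
lemma aux_deriv (t z : ℝ) :
    HasDerivAt (fun z : ℝ => (z - t) * Real.exp (-z))
      (Real.exp (-z) * (1 - z + t)) z := by
  have h1 : HasDerivAt (fun z : ℝ => z - t) 1 z :=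
    (hasDerivAt_id z).sub_const t
  have h2 : HasDerivAt (fun z : ℝ => Real.exp (-z)) (-Real.exp (-z)) z := by
    have := (Real.hasDerivAt_exp (-z)).comp z ((hasDerivAt_id z).neg)
    simpa [Function.comp_def] using this
  have : HasDerivAt (fun y : ℝ => (y - t) * Real.exp (-y)) _ z := h1.mul h2
  convert this using 1
  ring

/-- Feasibility and objective value of e^{-t} for the BALANCE variational instance. -/
theorem stmt_6 :
    (∀ t ∈ Set.Icc (0:ℝ) 1,
      (∫ z in (0:ℝ)..t, Real.exp (-z) * (1 - z + t)) ≤ t) ∧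
    (∫ t in (0:ℝ)..1, Real.exp (-t) * (1 - t)) = 1 / Real.exp 1 := by
  constructor
  · intro t ht
    have hcont : IntervalIntegrable (fun z => Real.exp (-z) * (1 - z + t))
        MeasureTheory.volume 0 t := by
      apply Continuous.intervalIntegrable
      continuity
    have := intervalIntegral.integral_eq_sub_of_hasDerivAt
      (f := fun z : ℝ => (z - t) * Real.exp (-z))
      (fun z _ => aux_deriv t z) hcont
    rw [this]
    simp
  · have hcont : IntervalIntegrable (fun z => Real.exp (-z) * (1 - z + 0))
        MeasureTheory.volume 0 1 := by
      apply Continuous.intervalIntegrable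
      continuity
    have h0 : (∫ z in (0:ℝ)..1, Real.exp (-z) * (1 - z + 0)) =
        ((1:ℝ) - 0) * Real.exp (-1) - ((0:ℝ) - 0) * Real.exp (-0) :=
      intervalIntegral.integral_eq_sub_of_hasDerivAt
        (fun z _ => aux_deriv 0 z) hcont
    have : (∫ t in (0:ℝ)..1, Real.exp (-t) * (1 - t)) = Real.exp (-1) := by
      simpa using h0
    rw [this, Real.exp_neg, one_div]
end

section
/- For every continuous nonnegative function g : [0,1] → ℝ satisfying ∫₀ᵗ g(z)(1 - z + t) dz ≤ t for all t ∈ [0,1], one has ∫₀¹ g(t)(1 - t) dt ≤ 1/e. -/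
open intervalIntegral Real

/-- Optimal value of the BALANCE variational instance is ≤ 1/e. -/
theorem stmt_7 (g : ℝ → ℝ) (hc : ContinuousOn g (Set.Icc 0 1))
    (hg : ∀ t ∈ Set.Icc (0:ℝ) 1, 0 ≤ g t)
    (hcons : ∀ t ∈ Set.Icc (0:ℝ) 1, (∫ z in (0:ℝ)..t, g z * (1 - z + t)) ≤ t) :
    (∫ t in (0:ℝ)..1, g t * (1 - t)) ≤ 1 / Real.exp 1 := by
  -- continuous extension of g to ℝ
  set G : ℝ → ℝ := fun x => g (max 0 (min 1 x)) with hGdef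
  have hproj : ∀ x, max 0 (min 1 x) ∈ Set.Icc (0:ℝ) 1 := by
    intro x
    constructor
    · exact le_max_left _ _
    · exact max_le (by norm_num) (min_le_left _ _)
  have hGc : Continuous G :=
    hc.comp_continuous (continuous_const.max (continuous_const.min continuous_id)) hproj
  have hGeq : ∀ z ∈ Set.Icc (0:ℝ) 1, G z = g z := by
    intro z hz
    simp only [hGdef]
    rw [min_eq_right hz.2, max_eq_right hz.1]
  -- the antiderivatives
  set u : ℝ → ℝ := fun t => ∫ z in (0:ℝ)..t, G z with hudef
  set w : ℝ → ℝ := fun t => ∫ z in (0:ℝ)..t, z * G z with hwdef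
  set v : ℝ → ℝ := fun t => t * u t - w t with hvdef
  have hzG : Continuous fun z : ℝ => z * G z := continuous_id.mul hGc
  have hu' : ∀ t : ℝ, HasDerivAt u (G t) t := by
    intro t
    exact intervalIntegral.integral_hasDerivAt_right (hGc.intervalIntegrable 0 t)
      (hGc.stronglyMeasurableAtFilter _ _) hGc.continuousAt
  have hw' : ∀ t : ℝ, HasDerivAt w (t * G t) t := by
    intro t
    exact intervalIntegral.integral_hasDerivAt_right (hzG.intervalIntegrable 0 t)
      (hzG.stronglyMeasurableAtFilter _ _) hzG.continuousAt
  have hv' : ∀ t : ℝ, HasDerivAt v (u t) t := by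
    intro t
    have h1 : HasDerivAt (fun t => t * u t) (1 * u t + t * G t) t :=
      (hasDerivAt_id t).mul (hu' t)
    have := h1.sub (hw' t)
    exact this.congr_deriv (by ring)
  -- constraint rewritten as v t + u t ≤ t
  have hkey : ∀ t ∈ Set.Icc (0:ℝ) 1, v t + u t ≤ t := by
    intro t ht
    have hsub : Set.uIcc (0:ℝ) t ⊆ Set.Icc 0 1 := by
      rw [Set.uIcc_of_le ht.1]
      exact Set.Icc_subset_Icc le_rfl ht.2
    have hint : (∫ z in (0:ℝ)..t, g z * (1 - z + t))
        = ∫ z in (0:ℝ)..t, (t * G z - z * G z + G z) := by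
      apply intervalIntegral.integral_congr
      intro z hz
      show g z * (1 - z + t) = t * G z - z * G z + G z
      rw [hGeq z (hsub hz)]
      ring
    have hsplit : (∫ z in (0:ℝ)..t, (t * G z - z * G z + G z))
        = t * u t - w t + u t := by
      rw [intervalIntegral.integral_add (f := fun z => t * G z - z * G z)
        (((continuous_const.mul hGc).sub hzG).intervalIntegrable 0 t)
        (hGc.intervalIntegrable 0 t),
        intervalIntegral.integral_sub (f := fun z => t * G z)
        ((continuous_const.mul hGc).intervalIntegrable 0 t)
        (hzG.intervalIntegrable 0 t),
        intervalIntegral.integral_const_mul]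
    have := hcons t ht
    rw [hint, hsplit] at this
    simpa [hvdef] using this
  -- Gronwall: F t = exp t * v t - t * exp t + exp t is antitone on [0,1]
  set F : ℝ → ℝ := fun t => Real.exp t * v t - t * Real.exp t + Real.exp t with hFdef
  have hF' : ∀ t : ℝ, HasDerivAt F (Real.exp t * (v t + u t) - t * Real.exp t) t := by
    intro t
    have h1 : HasDerivAt (fun t => Real.exp t * v t)
        (Real.exp t * v t + Real.exp t * u t) t := (Real.hasDerivAt_exp t).mul (hv' t)
    have h2 : HasDerivAt (fun t : ℝ => t * Real.exp t)
        (1 * Real.exp t + t * Real.exp t) t := (hasDerivAt_id t).mul (Real.hasDerivAt_exp t)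
    have := (h1.sub h2).add (Real.hasDerivAt_exp t)
    exact this.congr_deriv (by ring)
  have hanti : AntitoneOn F (Set.Icc 0 1) := by
    apply antitoneOn_of_deriv_nonpos (convex_Icc 0 1)
    · exact Continuous.continuousOn (by
        fun_prop (disch := exact fun t => (hF' t).differentiableAt))
    · intro t ht
      exact (hF' t).differentiableAt.differentiableWithinAt
    · intro t ht
      rw [interior_Icc] at ht
      rw [(hF' t).deriv]
      have h := hkey t ⟨le_of_lt ht.1, le_of_lt ht.2⟩
      have hexp : (0:ℝ) < Real.exp t := Real.exp_pos t
      nlinarith [Real.exp_pos t]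
  have hF0 : F 0 = 1 := by
    simp [hFdef, hvdef, hudef, hwdef, intervalIntegral.integral_same]
  have hF1 : Real.exp 1 * v 1 ≤ 1 := by
    have := hanti (Set.left_mem_Icc.mpr (by norm_num)) (Set.right_mem_Icc.mpr (by norm_num))
      (by norm_num)
    rw [hF0] at this
    simp only [hFdef] at this
    linarith
  -- objective equals v 1
  have hobj : (∫ t in (0:ℝ)..1, g t * (1 - t)) = v 1 := by
    have h1 : (∫ t in (0:ℝ)..1, g t * (1 - t)) = ∫ t in (0:ℝ)..1, (G t - t * G t) := by
      apply intervalIntegral.integral_congr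
      intro z hz
      rw [Set.uIcc_of_le (by norm_num : (0:ℝ) ≤ 1)] at hz
      show g z * (1 - z) = G z - z * G z
      rw [hGeq z hz]
      ring
    rw [h1, intervalIntegral.integral_sub (hGc.intervalIntegrable 0 1)
      (hzG.intervalIntegrable 0 1)]
    simp [hvdef, hudef, hwdef]
  rw [hobj, le_div_iff₀ (Real.exp_pos 1)]
  linarith [hF1, mul_comm (v 1) (Real.exp 1)]
end

section
/- The function g*(t) defined by g*(t) = 0 for t ∈ [0, 1/e] and g*(t) = (1/e)/t for t ∈ (1/e, 1] satisfies 0 ≤ g*(t) ≤ 1 - ∫₀ᵗ g*(z)/z dz for all t ∈ [0,1], and ∫₀¹ g*(t) dt = 1/e. -/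
open Real MeasureTheory intervalIntegral Set

local notation "c" => Real.exp (-1)

lemma hc0 : (0:ℝ) < c := Real.exp_pos _
lemma hc1 : c < 1 := by
  have := Real.exp_lt_one_iff.mpr (by norm_num : (-1:ℝ) < 0)
  exact this

-- integrand of inner integral
noncomputable def G (z : ℝ) : ℝ := (if z ≤ c then (0:ℝ) else c / z) / z

lemma G_zero {z : ℝ} (h : z ≤ c) : G z = 0 := by simp [G, h]

lemma G_pos {z : ℝ} (h : c < z) : G z = c / z ^ 2 := by
  simp [G, not_le.mpr h, div_div, sq]

lemma int_zero {t : ℝ} (ht0 : 0 ≤ t) (htc : t ≤ c) :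
    (∫ z in (0:ℝ)..t, G z) = 0 := by
  rw [intervalIntegral.integral_of_le ht0]
  rw [MeasureTheory.setIntegral_congr_fun measurableSet_Ioc
    (fun z hz => G_zero (hz.2.trans htc))]
  simp

lemma integrable_left {t : ℝ} (ht0 : 0 ≤ t) (htc : t ≤ c) :
    IntervalIntegrable G volume 0 t := by
  rw [intervalIntegrable_iff_integrableOn_Ioc_of_le ht0]
  exact (integrableOn_zero).congr_fun
    (fun z hz => (G_zero (hz.2.trans htc)).symm) measurableSet_Ioc

lemma integrable_right {t : ℝ} (ht : c ≤ t) :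
    IntervalIntegrable G volume c t := by
  rw [intervalIntegrable_iff_integrableOn_Ioc_of_le ht]
  have hcont : ContinuousOn (fun z : ℝ => c / z ^ 2) (Set.Icc c t) :=
    ContinuousOn.div continuousOn_const (continuousOn_pow 2)
      (fun z hz => pow_ne_zero 2 (ne_of_gt (lt_of_lt_of_le hc0 hz.1)))
  exact (hcont.integrableOn_Icc.mono_set Set.Ioc_subset_Icc_self).congr_fun
    (fun z hz => (G_pos hz.1).symm) measurableSet_Ioc

lemma int_right {t : ℝ} (ht : c ≤ t) :
    (∫ z in c..t, G z) = 1 - c / t := by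
  have h1 : (∫ z in c..t, G z) = ∫ z in c..t, c / z ^ 2 := by
    rw [intervalIntegral.integral_of_le ht, intervalIntegral.integral_of_le ht]
    exact MeasureTheory.setIntegral_congr_fun measurableSet_Ioc
      (fun z hz => G_pos hz.1)
  rw [h1]
  have := intervalIntegral.integral_eq_sub_of_hasDerivAt
    (f := fun z : ℝ => -(c / z)) (f' := fun z : ℝ => c / z ^ 2) (a := c) (b := t)
    (fun x hx => by
      have hx0 : x ≠ 0 := by
        have : (0:ℝ) < x := lt_of_lt_of_le hc0 (by
          rw [Set.uIcc_of_le ht] at hx; exact hx.1)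
        linarith
      have h := (hasDerivAt_inv hx0).const_mul c
      simpa [div_eq_mul_inv, neg_div, mul_comm, mul_assoc, Pi.neg_def] using h.neg)
    (by
      apply ContinuousOn.intervalIntegrable
      apply ContinuousOn.div continuousOn_const (continuousOn_pow 2)
      intro z hz
      rw [Set.uIcc_of_le ht] at hz
      exact pow_ne_zero 2 (ne_of_gt (lt_of_lt_of_le hc0 hz.1)))
  rw [this]
  rw [div_self (ne_of_gt hc0)]
  ring

noncomputable def g0 (t : ℝ) : ℝ := if t ≤ c then (0:ℝ) else c / t

lemma g0_int_zero : (∫ t in (0:ℝ)..c, g0 t) = 0 := by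
  rw [intervalIntegral.integral_of_le hc0.le]
  rw [MeasureTheory.setIntegral_congr_fun (g := fun _ => (0:ℝ)) measurableSet_Ioc
    (fun z hz => by simp [g0, hz.2])]
  simp

lemma g0_integrable_left : IntervalIntegrable g0 volume 0 c := by
  rw [intervalIntegrable_iff_integrableOn_Ioc_of_le hc0.le]
  exact (integrableOn_zero).congr_fun
    (fun z hz => by simp [g0, hz.2]) measurableSet_Ioc

lemma g0_integrable_right : IntervalIntegrable g0 volume c 1 := by
  rw [intervalIntegrable_iff_integrableOn_Ioc_of_le hc1.le]
  have hcont : ContinuousOn (fun z : ℝ => c / z) (Set.Icc c 1) :=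
    ContinuousOn.div continuousOn_const continuousOn_id
      (fun z hz => ne_of_gt (lt_of_lt_of_le hc0 hz.1))
  exact (hcont.integrableOn_Icc.mono_set Set.Ioc_subset_Icc_self).congr_fun
    (fun z hz => by simp [g0, not_le.mpr hz.1]) measurableSet_Ioc

lemma g0_int_right : (∫ t in c..(1:ℝ), g0 t) = c := by
  have h1 : (∫ t in c..(1:ℝ), g0 t) = ∫ t in c..(1:ℝ), c * t⁻¹ := by
    rw [intervalIntegral.integral_of_le hc1.le, intervalIntegral.integral_of_le hc1.le]
    exact MeasureTheory.setIntegral_congr_fun measurableSet_Ioc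
      (fun z hz => by simp [g0, not_le.mpr hz.1, div_eq_mul_inv])
  rw [h1, intervalIntegral.integral_const_mul, integral_inv (by
    intro h
    rw [Set.uIcc_of_le hc1.le] at h
    exact absurd h.1 (not_le.mpr hc0))]
  rw [one_div, Real.log_inv, Real.log_exp]
  ring

/-- Feasibility and objective value of the candidate optimal function
for the Secretary Problem variational instance. -/
theorem stmt_10 :
    (∀ t ∈ Set.Icc (0:ℝ) 1,
      0 ≤ (if t ≤ Real.exp (-1) then (0:ℝ) else Real.exp (-1) / t) ∧
      (if t ≤ Real.exp (-1) then (0:ℝ) else Real.exp (-1) / t) ≤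
        1 - ∫ z in (0:ℝ)..t,
          (if z ≤ Real.exp (-1) then (0:ℝ) else Real.exp (-1) / z) / z) ∧
    (∫ t in (0:ℝ)..1,
      (if t ≤ Real.exp (-1) then (0:ℝ) else Real.exp (-1) / t)) = Real.exp (-1) := by
  constructor
  · intro t ht
    have hG : (∫ z in (0:ℝ)..t,
        (if z ≤ Real.exp (-1) then (0:ℝ) else Real.exp (-1) / z) / z)
        = ∫ z in (0:ℝ)..t, G z := rfl
    by_cases htc : t ≤ c
    · refine ⟨by simp [htc], ?_⟩
      rw [if_pos htc, hG, int_zero ht.1 htc]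
      norm_num
    · push_neg at htc
      have hsplit : (∫ z in (0:ℝ)..t, G z)
          = (∫ z in (0:ℝ)..c, G z) + ∫ z in c..t, G z :=
        (intervalIntegral.integral_add_adjacent_intervals
          (integrable_left hc0.le le_rfl) (integrable_right htc.le)).symm
      rw [hG, hsplit, int_zero hc0.le le_rfl, int_right htc.le, if_neg (not_le.mpr htc)]
      constructor
      · exact le_of_lt (div_pos hc0 (hc0.trans htc))
      · exact le_of_eq (by ring)
  · have hg : (∫ t in (0:ℝ)..1,
        (if t ≤ Real.exp (-1) then (0:ℝ) else Real.exp (-1) / t))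
        = ∫ t in (0:ℝ)..1, g0 t := rfl
    rw [hg, ← intervalIntegral.integral_add_adjacent_intervals
      g0_integrable_left g0_integrable_right, g0_int_zero, g0_int_right, zero_add]
end

section
/- For every continuous function g : [0,1] → ℝ with g(t) ≥ 0 and g(t) + ∫₀ᵗ g(z)/z dz ≤ 1 for all t ∈ [0,1] (where g(z)/z is integrable on [0,1]), one has ∫₀¹ g(t) dt ≤ 1/e. -/
open MeasureTheory intervalIntegral Set

/-- Optimal value of the Secretary Problem variational instance is ≤ 1/e. -/
theorem stmt_11 (g : ℝ → ℝ) (hc : ContinuousOn g (Set.Icc 0 1))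
    (hg : ∀ t ∈ Set.Icc (0:ℝ) 1, 0 ≤ g t)
    (hint : IntervalIntegrable (fun z => g z / z) MeasureTheory.volume 0 1)
    (hcons : ∀ t ∈ Set.Icc (0:ℝ) 1, g t + (∫ z in (0:ℝ)..t, g z / z) ≤ 1) :
    (∫ t in (0:ℝ)..1, g t) ≤ 1 / Real.exp 1 := by
  set a : ℝ := Real.exp (-1) with ha
  have ha0 : 0 < a := Real.exp_pos _
  have ha1 : a ≤ 1 := by
    rw [ha]
    calc Real.exp (-1) ≤ Real.exp 0 := Real.exp_le_exp.2 (by norm_num)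
      _ = 1 := Real.exp_zero
  have hloga : Real.log a = -1 := Real.log_exp _
  set u : ℝ → ℝ := fun t => ∫ z in (0:ℝ)..t, g z / z with hu
  have huicc : (Set.uIcc (0:ℝ) 1) = Set.Icc 0 1 := Set.uIcc_of_le (by norm_num)
  have huicca : (Set.uIcc a (1:ℝ)) = Set.Icc a 1 := Set.uIcc_of_le ha1
  have hsub : Set.Icc a (1:ℝ) ⊆ Set.Icc 0 1 := Set.Icc_subset_Icc ha0.le le_rfl
  -- g is interval integrable
  have hgi : IntervalIntegrable g volume 0 1 := by
    apply ContinuousOn.intervalIntegrable; rwa [huicc]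
  -- u is continuous on [0,1]
  have hucont : ContinuousOn u (Set.Icc 0 1) := by
    have := intervalIntegral.continuousOn_primitive_interval' hint
      (Set.left_mem_uIcc (a := (0:ℝ)) (b := 1))
    rwa [huicc] at this
  -- derivative of u on (0,1)
  have hud : ∀ t ∈ Set.Ioo (0:ℝ) 1, HasDerivAt u (g t / t) t := by
    intro t ht
    have hopen : IsOpen (Set.Ioo (0:ℝ) 1) := isOpen_Ioo
    have hcn : ContinuousOn (fun z => g z / z) (Set.Ioo 0 1) := by
      apply ContinuousOn.div (hc.mono Set.Ioo_subset_Icc_self) continuousOn_id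
      exact fun z hz => ne_of_gt hz.1
    have hmeas := (ContinuousOn.stronglyMeasurableAtFilter hopen hcn (μ := volume)) t ht
    have hct : ContinuousAt (fun z => g z / z) t :=
      hcn.continuousAt (hopen.mem_nhds ht)
    exact intervalIntegral.integral_hasDerivAt_right
      (hint.mono_set (by rw [huicc, Set.uIcc_of_le ht.1.le]; exact Set.Icc_subset_Icc le_rfl ht.2.le)) hmeas hct
  -- Step A : ∫₀ᵃ g ≤ a * u a
  have hga : IntervalIntegrable g volume 0 a :=
    hgi.mono_set (by rw [huicc, Set.uIcc_of_le ha0.le]; exact Set.Icc_subset_Icc le_rfl ha1)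
  have hinta : IntervalIntegrable (fun z => g z / z) volume 0 a :=
    hint.mono_set (by rw [huicc, Set.uIcc_of_le ha0.le]; exact Set.Icc_subset_Icc le_rfl ha1)
  have stepA : (∫ t in (0:ℝ)..a, g t) ≤ a * u a := by
    have h1 : (∫ t in (0:ℝ)..a, g t) = ∫ t in Set.Ioc (0:ℝ) a, g t :=
      intervalIntegral.integral_of_le ha0.le
    have h2 : a * u a = ∫ t in Set.Ioc (0:ℝ) a, a * (g t / t) := by
      have huaeq : u a = ∫ t in Set.Ioc (0:ℝ) a, g t / t :=
        intervalIntegral.integral_of_le ha0.le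
      rw [huaeq, ← MeasureTheory.integral_const_mul]
    rw [h1, h2]
    apply setIntegral_mono_on hga.1 (hinta.1.const_mul a) measurableSet_Ioc
    intro z hz
    have hz0 : 0 < z := hz.1
    have hgz : 0 ≤ g z := hg z ⟨hz0.le, hz.2.trans ha1⟩
    have : g z / a ≤ g z / z := div_le_div_of_nonneg_left hgz hz0 hz.2
    calc g z = a * (g z / a) := by field_simp
      _ ≤ a * (g z / z) := by apply mul_le_mul_of_nonneg_left this ha0.le
  -- Integration by parts on [a,1]
  set M : ℝ → ℝ := fun t => -(t * Real.log t) with hM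
  set f' : ℝ → ℝ := fun t => -(1 + Real.log t) * u t - Real.log t * g t with hf'
  have hlogcont : ContinuousOn Real.log (Set.Icc a 1) :=
    Real.continuousOn_log.mono (fun z hz => ne_of_gt (lt_of_lt_of_le ha0 hz.1))
  have hMcont : ContinuousOn M (Set.Icc a 1) :=
    ((continuousOn_id.mul hlogcont)).neg
  have hucont' : ContinuousOn u (Set.Icc a 1) := hucont.mono hsub
  have hgcont' : ContinuousOn g (Set.Icc a 1) := hc.mono hsub
  have hf'cont : ContinuousOn f' (Set.Icc a 1) := by
    apply ContinuousOn.sub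
    · exact ((continuousOn_const.add hlogcont).neg.mul hucont')
    · exact hlogcont.mul hgcont'
  have hf'int : IntervalIntegrable f' volume a 1 := by
    have : ContinuousOn f' (Set.uIcc a 1) := by rwa [huicca]
    exact this.intervalIntegrable
  have IBP : (∫ t in a..1, f' t) = -(a * u a) := by
    have := intervalIntegral.integral_eq_sub_of_hasDeriv_right_of_le ha1
      (hMcont.mul hucont')
      (f' := f')
      (fun t ht => by
        have ht0 : 0 < t := lt_trans ha0 ht.1
        have hMd : HasDerivAt M (-(Real.log t + 1)) t :=
          (Real.hasDerivAt_mul_log (ne_of_gt ht0)).neg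
        have hud' : HasDerivAt u (g t / t) t := hud t ⟨ht0, ht.2⟩
        have := hMd.mul hud'
        have heq : -(Real.log t + 1) * u t + M t * (g t / t) = f' t := by
          rw [hM, hf']
          field_simp
          ring
        rw [heq] at this
        exact this.hasDerivWithinAt)
      hf'int
    rw [this, hM]
    simp [Real.log_one, hloga]
  -- pointwise identity on [a,1] : g t = (1+log t)*(g t + u t) + f' t
  have hpt : ∀ t ∈ Set.Icc a 1, g t = (1 + Real.log t) * (g t + u t) + f' t := by
    intro t ht
    rw [hf']; ring
  have hcu : ContinuousOn (fun t => (1 + Real.log t) * (g t + u t)) (Set.Icc a 1) :=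
    (continuousOn_const.add hlogcont).mul (hgcont'.add hucont')
  have hcuint : IntervalIntegrable (fun t => (1 + Real.log t) * (g t + u t)) volume a 1 := by
    have : ContinuousOn (fun t => (1 + Real.log t) * (g t + u t)) (Set.uIcc a 1) := by
      rwa [huicca]
    exact this.intervalIntegrable
  have hlint : IntervalIntegrable (fun t => 1 + Real.log t) volume a 1 := by
    have : ContinuousOn (fun t => 1 + Real.log t) (Set.uIcc a 1) := by
      rw [huicca]; exact continuousOn_const.add hlogcont
    exact this.intervalIntegrable
  -- ∫_a^1 (1 + log t) dt = a
  have hintlog : (∫ t in a..1, (1 + Real.log t)) = a := by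
    have := intervalIntegral.integral_eq_sub_of_hasDeriv_right_of_le ha1
      (f := fun t => t * Real.log t)
      (continuousOn_id.mul hlogcont)
      (f' := fun t => 1 + Real.log t)
      (fun t ht => by
        have ht0 : 0 < t := lt_trans ha0 ht.1
        have h := Real.hasDerivAt_mul_log (ne_of_gt ht0)
        simpa [add_comm] using h.hasDerivWithinAt)
      hlint
    rw [this]
    simp [Real.log_one, hloga]
  -- Step B : ∫_a^1 g ≤ a - a * u a
  have stepB : (∫ t in a..1, g t) ≤ a - a * u a := by
    have h1 : (∫ t in a..1, g t)
        = (∫ t in a..1, (1 + Real.log t) * (g t + u t)) + ∫ t in a..1, f' t := by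
      rw [← intervalIntegral.integral_add hcuint hf'int]
      apply intervalIntegral.integral_congr
      intro t ht
      rw [huicca] at ht
      exact hpt t ht
    have h2 : (∫ t in a..1, (1 + Real.log t) * (g t + u t)) ≤ ∫ t in a..1, (1 + Real.log t) := by
      apply intervalIntegral.integral_mono_on ha1 hcuint hlint
      intro t ht
      have ht01 : t ∈ Set.Icc (0:ℝ) 1 := hsub ht
      have hlognn : 0 ≤ 1 + Real.log t := by
        have : Real.log a ≤ Real.log t := Real.log_le_log ha0 ht.1
        rw [hloga] at this; linarith
      have hc1 : g t + u t ≤ 1 := hcons t ht01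
      calc (1 + Real.log t) * (g t + u t) ≤ (1 + Real.log t) * 1 :=
            mul_le_mul_of_nonneg_left hc1 hlognn
        _ = 1 + Real.log t := mul_one _
    rw [h1, IBP, hintlog] at *
    linarith
  -- combine
  have hsplit : (∫ t in (0:ℝ)..1, g t) = (∫ t in (0:ℝ)..a, g t) + ∫ t in a..1, g t := by
    rw [intervalIntegral.integral_add_adjacent_intervals hga
      (hgi.mono_set (by rw [huicc, huicca]; exact hsub))]
  have : (∫ t in (0:ℝ)..1, g t) ≤ a := by
    rw [hsplit]; linarith
  rwa [ha, Real.exp_neg, ← one_div] at this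
end

section
/- For all real numbers a₁, b₁, a₂ with 0 < a₁ < b₁ < a₂ < 1, it holds that a₁·ln(b₁/a₁) + (a₁/b₁)·a₂·ln(1/a₂) < 1/e. -/
open Real

/-- `x * log (1/x) ≤ exp (-1)` for `x > 0`. -/
lemma aux_mul_log_inv_le (x : ℝ) (hx : 0 < x) : x * Real.log (1 / x) ≤ Real.exp (-1) := by
  have he : (0:ℝ) < Real.exp (-1) := Real.exp_pos _
  have h := Real.log_le_sub_one_of_pos (x := 1 / (x * Real.exp 1)) (by positivity)
  have hlog : Real.log (1 / (x * Real.exp 1)) = Real.log (1/x) - 1 := by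
    rw [one_div, one_div, Real.log_inv, Real.log_inv, Real.log_mul (ne_of_gt hx) (ne_of_gt (Real.exp_pos 1)), Real.log_exp]
    ring
  rw [hlog] at h
  -- log(1/x) ≤ 1/(x * exp 1)
  have h2 : Real.log (1/x) ≤ 1 / (x * Real.exp 1) := by linarith
  have h3 : x * Real.log (1/x) ≤ x * (1 / (x * Real.exp 1)) :=
    mul_le_mul_of_nonneg_left h2 hx.le
  have h4 : x * (1 / (x * Real.exp 1)) = Real.exp (-1) := by
    rw [Real.exp_neg]
    field_simp
  linarith

/-- `x * log x` is strictly monotone on `[exp (-1), ∞)`. -/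
lemma aux_strictMonoOn : StrictMonoOn (fun x : ℝ => x * Real.log x) (Set.Ici (Real.exp (-1))) := by
  have he : (0:ℝ) < Real.exp (-1) := Real.exp_pos _
  apply StrictMonoOn.mono (s := Set.Ici (Real.exp (-1)))
    (strictMonoOn_of_deriv_pos (convex_Ici _)
      (Real.continuous_mul_log.continuousOn) ?_) le_rfl
  intro x hx
  rw [interior_Ici] at hx
  rw [Real.deriv_mul_log (lt_trans he hx).ne']
  have : -1 < Real.log x := by
    have := Real.lt_log_iff_exp_lt (lt_trans he hx) |>.mpr hx
    linarith [this]
  linarith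

/-- K = 2 case of the sequence-optimization lemma. -/
theorem stmt_15 (a₁ b₁ a₂ : ℝ) (h1 : 0 < a₁) (h2 : a₁ < b₁) (h3 : b₁ < a₂)
    (h4 : a₂ < 1) :
    a₁ * Real.log (b₁ / a₁) + (a₁ / b₁) * a₂ * Real.log (1 / a₂) < Real.exp (-1) := by
  have hb : 0 < b₁ := h1.trans h2
  have ha2 : 0 < a₂ := hb.trans h3
  have he : (0:ℝ) < Real.exp (-1) := Real.exp_pos _
  rcases lt_or_ge b₁ (Real.exp (-1)) with hcase | hcase
  · -- b₁ < 1/e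
    -- expr ≤ a₁ log(b₁/a₁) + (a₁/b₁) * exp(-1) ≤ (b₁-a₁) + (a₁/b₁)*exp(-1) < exp(-1)
    have hA : a₂ * Real.log (1 / a₂) ≤ Real.exp (-1) := aux_mul_log_inv_le a₂ ha2
    have hr : 0 < a₁ / b₁ := div_pos h1 hb
    have step1 : (a₁ / b₁) * a₂ * Real.log (1 / a₂) ≤ (a₁ / b₁) * Real.exp (-1) := by
      calc (a₁ / b₁) * a₂ * Real.log (1 / a₂) = (a₁ / b₁) * (a₂ * Real.log (1 / a₂)) := by ring
        _ ≤ (a₁ / b₁) * Real.exp (-1) := mul_le_mul_of_nonneg_left hA hr.le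
    have step2 : a₁ * Real.log (b₁ / a₁) ≤ b₁ - a₁ := by
      have h := Real.log_le_sub_one_of_pos (x := b₁ / a₁) (by positivity)
      have := mul_le_mul_of_nonneg_left h h1.le
      have heq : a₁ * (b₁ / a₁ - 1) = b₁ - a₁ := by field_simp
      linarith [heq ▸ this]
    have step3 : (b₁ - a₁) + (a₁ / b₁) * Real.exp (-1) < Real.exp (-1) := by
      -- need (b₁ - a₁) < (1 - a₁/b₁) * exp(-1) = ((b₁-a₁)/b₁)*exp(-1)
      have h5 : (1 - a₁ / b₁) * Real.exp (-1) = ((b₁ - a₁) / b₁) * Real.exp (-1) := by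
        field_simp
      have h6 : b₁ - a₁ < ((b₁ - a₁) / b₁) * Real.exp (-1) := by
        rw [div_mul_eq_mul_div, lt_div_iff₀ hb]
        have hba : 0 < b₁ - a₁ := by linarith
        calc (b₁ - a₁) * b₁ < (b₁ - a₁) * Real.exp (-1) :=
          mul_lt_mul_of_pos_left hcase hba
          _ ≤ (b₁ - a₁) * Real.exp (-1) := le_rfl
      nlinarith [h6, h5]
    linarith
  · -- b₁ ≥ 1/e: a₂ log(1/a₂) < b₁ log(1/b₁), then expr < a₁ log(1/a₁) ≤ exp(-1)
    have hmono : b₁ * Real.log b₁ < a₂ * Real.log a₂ :=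
      aux_strictMonoOn hcase (hcase.trans h3.le) h3
    have hdec : a₂ * Real.log (1 / a₂) < b₁ * Real.log (1 / b₁) := by
      rw [one_div, one_div, Real.log_inv, Real.log_inv]
      nlinarith
    have hr : 0 < a₁ / b₁ := div_pos h1 hb
    have step1 : (a₁ / b₁) * a₂ * Real.log (1 / a₂) < (a₁ / b₁) * (b₁ * Real.log (1 / b₁)) := by
      calc (a₁ / b₁) * a₂ * Real.log (1 / a₂) = (a₁ / b₁) * (a₂ * Real.log (1 / a₂)) := by ring
        _ < (a₁ / b₁) * (b₁ * Real.log (1 / b₁)) := mul_lt_mul_of_pos_left hdec hr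
    have heq : (a₁ / b₁) * (b₁ * Real.log (1 / b₁)) = a₁ * Real.log (1 / b₁) := by
      field_simp
    have hsum : a₁ * Real.log (b₁ / a₁) + a₁ * Real.log (1 / b₁) = a₁ * Real.log (1 / a₁) := by
      rw [← mul_add, ← Real.log_mul (by positivity) (by positivity)]
      congr 2
      field_simp
    have hfinal : a₁ * Real.log (1 / a₁) ≤ Real.exp (-1) := aux_mul_log_inv_le a₁ h1
    linarith [step1, heq ▸ step1]
end

section
/- For every integer n ≥ 1 and every x ∈ [0,1]ⁿ satisfying x_i + (1/n)·∑_{j=1}^{i} x_j ≥ 1 for all i ∈ {1,...,n}, one has (1/n)·∑_{i=1}^{n} x_i ≥ 1 - (n/(n+1))^n. -/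
/-- Lower bound on the optimal value of the discrete RANKING
factor-revealing LP of size n. -/
theorem stmt_17 (n : ℕ) (hn : 1 ≤ n) (x : ℕ → ℝ)
    (hx : ∀ i ∈ Finset.Icc 1 n, x i ∈ Set.Icc (0:ℝ) 1)
    (hcons : ∀ i ∈ Finset.Icc 1 n,
      x i + (1 / (n:ℝ)) * ∑ j ∈ Finset.Icc 1 i, x j ≥ 1) :
    (1 / (n:ℝ)) * ∑ i ∈ Finset.Icc 1 n, x i ≥ 1 - ((n:ℝ) / (n + 1)) ^ n := by
  have hn0 : (0:ℝ) < n := by exact_mod_cast hn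
  set r : ℝ := (n:ℝ) / (n + 1) with hr
  have hrn : ((n:ℝ) + 1) * r = n := by
    rw [hr]; field_simp
  have hr0 : 0 ≤ r := by positivity
  have hkey : ∀ i ≤ n, (n:ℝ) * (1 - r ^ i) ≤ ∑ j ∈ Finset.Icc 1 i, x j := by
    intro i hi
    induction i with
    | zero => simp
    | succ k ih =>
      have hk : k ≤ n := Nat.le_of_succ_le hi
      have ih' := ih hk
      have hc := hcons (k+1) (Finset.mem_Icc.mpr ⟨Nat.succ_le_succ (Nat.zero_le k), hi⟩)
      rw [Finset.sum_Icc_succ_top (by omega : 1 ≤ k+1)] at hc ⊢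
      have hc' : ((n:ℝ) + 1) * x (k+1) ≥ n - ∑ j ∈ Finset.Icc 1 k, x j := by
        have := mul_le_mul_of_nonneg_left hc (le_of_lt hn0)
        have hne : (n:ℝ) ≠ 0 := ne_of_gt hn0
        field_simp at this
        nlinarith [this]
      have hrk : 0 ≤ r ^ k := pow_nonneg hr0 k
      rw [pow_succ]
      have key : ((n:ℝ)+1) * (r ^ k * r) = (n:ℝ) * r ^ k := by
        rw [mul_comm (r ^ k) r, ← mul_assoc, mul_comm (((n:ℝ)+1)) r, mul_comm r ((n:ℝ)+1), hrn]
      nlinarith [ih', hc', hrk, key, hn0, mul_le_mul_of_nonneg_left ih' hn0.le]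
  have h := hkey n le_rfl
  rw [ge_iff_le, ← sub_nonneg]
  have : (1 / (n:ℝ)) * ∑ i ∈ Finset.Icc 1 n, x i - (1 - r ^ n)
      = (1 / n) * (∑ i ∈ Finset.Icc 1 n, x i - n * (1 - r ^ n)) := by
    field_simp
  rw [this]
  exact mul_nonneg (by positivity) (by linarith)
end

section
/- If g : [0,1] → [0,1] is continuous, nonincreasing, and satisfies 1 - g(t) ≤ ∫₀ᵗ g(z) dz for all t ∈ [0,1], then ∫₀¹ g(t) dt ≥ 1 - 1/e, and g(t) = e^{-t} is feasible and achieves equality. -/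
lemma int_exp_neg (t : ℝ) : (∫ z in (0:ℝ)..t, Real.exp (-z)) = 1 - Real.exp (-t) := by
  have hd : ∀ z : ℝ, HasDerivAt (fun z => -Real.exp (-z)) (Real.exp (-z)) z := by
    intro z
    exact ((Real.hasDerivAt_exp (-z)).comp z (hasDerivAt_neg z)).neg.congr_deriv (by simp)
  rw [intervalIntegral.integral_eq_sub_of_hasDerivAt (fun z _ => hd z)
    ((Real.continuous_exp.comp continuous_neg).intervalIntegrable 0 t)]
  simp
  ring

/-- Continuous reformulation of the illustrative toy factor-revealing LP:
optimal value 1 - 1/e, attained by g(t) = e^{-t}. -/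
theorem stmt_19 :
    (∀ g : ℝ → ℝ, ContinuousOn g (Set.Icc 0 1) →
      (∀ t ∈ Set.Icc (0:ℝ) 1, g t ∈ Set.Icc (0:ℝ) 1) →
      AntitoneOn g (Set.Icc 0 1) →
      (∀ t ∈ Set.Icc (0:ℝ) 1, 1 - g t ≤ ∫ z in (0:ℝ)..t, g z) →
      (∫ t in (0:ℝ)..1, g t) ≥ 1 - 1 / Real.exp 1) ∧
    (∀ t ∈ Set.Icc (0:ℝ) 1, Real.exp (-t) ∈ Set.Icc (0:ℝ) 1) ∧
    AntitoneOn (fun t : ℝ => Real.exp (-t)) (Set.Icc 0 1) ∧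
    (∀ t ∈ Set.Icc (0:ℝ) 1, 1 - Real.exp (-t) ≤ ∫ z in (0:ℝ)..t, Real.exp (-z)) ∧
    (∫ t in (0:ℝ)..1, Real.exp (-t)) = 1 - 1 / Real.exp 1 := by
  refine ⟨?_, ?_, ?_, ?_, ?_⟩
  · intro g hc hmem hmono hconstr
    set F : ℝ → ℝ := fun t => ∫ z in (0:ℝ)..t, g z with hF
    have hicc : Set.uIcc (0:ℝ) 1 = Set.Icc 0 1 := Set.uIcc_of_le zero_le_one
    have hgint : IntervalIntegrable g MeasureTheory.volume 0 1 :=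
      ContinuousOn.intervalIntegrable (by rw [hicc]; exact hc)
    have hFcont : ContinuousOn F (Set.Icc 0 1) := by
      have := intervalIntegral.continuousOn_primitive_interval
        (f := g) (a := (0:ℝ)) (b := 1) (μ := MeasureTheory.volume)
        (by rw [hicc]; exact hc.integrableOn_Icc)
      rwa [hicc] at this
    set h : ℝ → ℝ := fun t => (1 - F t) * Real.exp t with hh
    have hhcont : ContinuousOn h (Set.Icc 0 1) :=
      (continuousOn_const.sub hFcont).mul Real.continuous_exp.continuousOn
    have hderiv : ∀ t ∈ Set.Ioo (0:ℝ) 1,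
        HasDerivAt h ((1 - F t - g t) * Real.exp t) t := by
      intro t ht
      have hmem' : Set.Icc (0:ℝ) 1 ∈ nhds t := Icc_mem_nhds ht.1 ht.2
      have hgt : ContinuousAt g t := hc.continuousAt hmem'
      have hgi : IntervalIntegrable g MeasureTheory.volume 0 t :=
        ContinuousOn.intervalIntegrable (by
          rw [Set.uIcc_of_le ht.1.le]
          exact hc.mono (Set.Icc_subset_Icc le_rfl ht.2.le))
      have hFd : HasDerivAt F (g t) t :=
        intervalIntegral.integral_hasDerivAt_right hgi
          ((hc.mono Set.Ioo_subset_Icc_self).stronglyMeasurableAtFilter isOpen_Ioo t ht) hgt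
      have := ((hasDerivAt_const t (1:ℝ)).sub hFd).mul (Real.hasDerivAt_exp t)
      refine this.congr_deriv ?_
      simp only [Pi.sub_apply]
      ring
    have hanti : AntitoneOn h (Set.Icc 0 1) := by
      apply antitoneOn_of_deriv_nonpos (convex_Icc 0 1) hhcont
      · intro t ht
        rw [interior_Icc] at ht
        exact (hderiv t ht).differentiableAt.differentiableWithinAt
      · intro t ht
        rw [interior_Icc] at ht
        rw [(hderiv t ht).deriv]
        apply mul_nonpos_of_nonpos_of_nonneg _ (Real.exp_nonneg t)
        have := hconstr t ⟨ht.1.le, ht.2.le⟩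
        simp only [hF] at this ⊢
        linarith
    have hle : h 1 ≤ h 0 := hanti ⟨le_rfl, zero_le_one⟩ ⟨zero_le_one, le_rfl⟩ zero_le_one
    have h0 : h 0 = 1 := by simp [hh, hF]
    have h1 : h 1 = (1 - F 1) * Real.exp 1 := rfl
    have hpos : (0:ℝ) < Real.exp 1 := Real.exp_pos 1
    rw [h0, h1] at hle
    rw [ge_iff_le]
    show 1 - 1 / Real.exp 1 ≤ F 1
    have hinv : 1 / Real.exp 1 * Real.exp 1 = 1 := one_div_mul_cancel hpos.ne'
    nlinarith
  · intro t ht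
    refine ⟨(Real.exp_pos _).le, ?_⟩
    rw [← Real.exp_zero]
    exact Real.exp_le_exp.mpr (by linarith [ht.1])
  · intro a _ b _ hab
    exact Real.exp_le_exp.mpr (by linarith)
  · intro t ht
    rw [int_exp_neg]
  · rw [int_exp_neg, Real.exp_neg]
    simp [one_div]
end
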